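/- Combining the previous bounds: for the rounded auxiliary problem with constraint matrix E = [I, A_L⁻¹ A_{L̄}] (totally unimodular) and right-hand side ⌈A_L⁻¹ b / k⌉ where k = ‖Aᵀ(AAᵀ)⁻¹b‖₂/(m + n²), every basic solution x satisfies ‖x‖∞ ≤ m(m n (m + n²) + 1). -/

import Mathlib

open Matrix

/-- Euclidean norm of a finite real vector. -/
noncomputable def norm2 {ι : Type*} [Fintype ι] (x : ι → ℝ) : ℝ :=
  Real.sqrt (∑ i, (x i) ^ 2)

/-- Sup norm of a finite real vector. -/
noncomputable def normInf {ι : Type*} [Fintype ι] (x : ι → ℝ) : ℝ :=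
  ⨆ i, |x i|

/-! A totally unimodular square matrix with unit determinant has determinant `±1`, and its
adjugate entries are minors, hence in `{0, ±1}`; so its inverse has entries in `{0, ±1}`.
Writing `b = A u` with `u = Aᵀ(AAᵀ)⁻¹b`, every entry of `A_L⁻¹ b = A_L⁻¹ A u` is at most
`m n ‖u‖₂ = m n (m + n²) k` in absolute value, so the rounded right-hand side `g` has
`‖g‖∞ ≤ m n (m + n²) + 1`, and a basic solution `x = E_B⁻¹ g` has `‖x‖∞ ≤ m ‖g‖∞`. -/

lemma abs_le_one_of_mem_range_signType_cast {R : Type*} [Ring R] [LinearOrder R]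
    [IsOrderedRing R] {x : R} (hx : x ∈ Set.range SignType.cast) : |x| ≤ 1 := by
  obtain ⟨s, rfl⟩ := hx
  cases s <;> simp

namespace Matrix

variable {ι κ R : Type*}

lemma abs_mulVec_apply_le [Ring R] [LinearOrder R] [IsOrderedRing R] [Fintype κ]
    (M : Matrix ι κ R) (v : κ → R) {a c : R} (hM : ∀ i j, |M i j| ≤ a) (hv : ∀ j, |v j| ≤ c)
    (i : ι) : |(M *ᵥ v) i| ≤ Fintype.card κ * (a * c) := by
  calc |(M *ᵥ v) i| ≤ ∑ j, |M i j * v j| := Finset.abs_sum_le_sum_abs _ _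
    _ ≤ ∑ _j : κ, a * c := Finset.sum_le_sum fun j _ => by
        rw [abs_mul]
        exact mul_le_mul (hM i j) (hv j) (abs_nonneg _) ((abs_nonneg _).trans (hM i j))
    _ = Fintype.card κ * (a * c) := by simp

variable [Fintype ι] [DecidableEq ι]

lemma IsTotallyUnimodular.adjugate_apply_mem_range [CommRing R] {M : Matrix ι ι R}
    (hM : M.IsTotallyUnimodular) (i j : ι) : M.adjugate i j ∈ Set.range SignType.cast := by
  -- the `j`-th row replaced by the `i`-th unit row is a square submatrix of `[M; 1]`
  have hrow : M.updateRow j (Pi.single i 1) =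
      (fromRows M 1).submatrix (fun r => if r = j then Sum.inr i else Sum.inl r) id := by
    ext r c
    by_cases hr : r = j
    · subst hr
      simp [one_apply, Pi.single_apply, eq_comm]
    · simp [hr]
  rw [adjugate_apply, hrow]
  exact ((isTotallyUnimodular_iff_fintype _).mp
    ((fromRows_one_isTotallyUnimodular_iff M).mpr hM)) ι _ id

lemma IsTotallyUnimodular.inv_apply_mem_range [Field R] {M : Matrix ι ι R}
    (hM : M.IsTotallyUnimodular) (hdet : IsUnit M.det) (i j : ι) :
    M⁻¹ i j ∈ Set.range SignType.cast := by
  obtain ⟨s, hs⟩ := (isTotallyUnimodular_iff_fintype M).mp hM ι id id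
  obtain ⟨t, ht⟩ := hM.adjugate_apply_mem_range i j
  rw [submatrix_id_id] at hs
  have hs_inv : (s : R)⁻¹ = s := by
    cases s
    · rw [← hs] at hdet
      simp at hdet
    all_goals simp
  refine ⟨s * t, ?_⟩
  rw [inv_def, Ring.inverse_eq_inv, smul_apply, smul_eq_mul, ← hs, hs_inv, ← ht, SignType.coe_mul]

variable [Field R] [LinearOrder R] [IsStrictOrderedRing R]

lemma IsTotallyUnimodular.abs_inv_mulVec_apply_le {M : Matrix ι ι R}
    (hM : M.IsTotallyUnimodular) (hdet : IsUnit M.det) {v : ι → R} {c : R}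
    (hv : ∀ j, |v j| ≤ c) (i : ι) : |(M⁻¹ *ᵥ v) i| ≤ Fintype.card ι * c := by
  simpa using abs_mulVec_apply_le M⁻¹ v
    (fun i j => abs_le_one_of_mem_range_signType_cast (hM.inv_apply_mem_range hdet i j)) hv i

lemma IsTotallyUnimodular.abs_basicSolution_le {E : Matrix ι κ R}
    (hE : E.IsTotallyUnimodular) {B : ι → κ} (hEB : IsUnit (E.submatrix id B).det)
    {g : ι → R} {c : R} (hg : ∀ i, |g i| ≤ c) {x : κ → R}
    (hxB : x ∘ B = (E.submatrix id B)⁻¹ *ᵥ g) (hx0 : ∀ j, j ∉ Set.range B → x j = 0)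
    (j : κ) : |x j| ≤ Fintype.card ι * c := by
  by_cases hj : j ∈ Set.range B
  · obtain ⟨i, rfl⟩ := hj
    rw [← Function.comp_apply (f := x), hxB]
    exact (hE.submatrix id B).abs_inv_mulVec_apply_le hEB hg i
  · rw [hx0 j hj, abs_zero]
    rcases isEmpty_or_nonempty ι with hι | ⟨⟨i⟩⟩
    · simp
    · exact mul_nonneg (Nat.cast_nonneg _) ((abs_nonneg _).trans (hg i))

end Matrix

lemma abs_intCeil_le_add_one {R : Type*} [Field R] [LinearOrder R] [IsStrictOrderedRing R]
    [FloorRing R] {t c : R} (ht : |t| ≤ c) : |(⌈t⌉ : R)| ≤ c + 1 := by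
  rw [abs_le] at ht ⊢
  constructor
  · linarith [Int.le_ceil t]
  · linarith [Int.ceil_lt_add_one t]

section Norms

variable {ι : Type*} [Fintype ι]

lemma abs_le_norm2 (x : ι → ℝ) (i : ι) : |x i| ≤ norm2 x := by
  rw [norm2, ← Real.sqrt_sq_eq_abs]
  exact Real.sqrt_le_sqrt (Finset.single_le_sum (fun j _ => sq_nonneg (x j)) (Finset.mem_univ i))

lemma norm2_pos {x : ι → ℝ} (hx : x ≠ 0) : 0 < norm2 x := by
  obtain ⟨i, hi⟩ := Function.ne_iff.mp hx
  exact (abs_pos.mpr hi).trans_le (abs_le_norm2 x i)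

lemma normInf_le {x : ι → ℝ} {c : ℝ} (hc : 0 ≤ c) (hx : ∀ i, |x i| ≤ c) : normInf x ≤ c :=
  Real.iSup_le hx hc

end Norms

theorem stmt10_general {m n p : ℕ} (A : Matrix (Fin m) (Fin n) ℝ)
    (hTU : A.IsTotallyUnimodular)
    (hinv : IsUnit (A * Aᵀ).det)
    (b : Fin m → ℝ) (hb : (Aᵀ * (A * Aᵀ)⁻¹).mulVec b ≠ 0)
    (L : Fin m → Fin n)
    (hAL : IsUnit (A.submatrix id L).det)
    (E : Matrix (Fin m) (Fin m ⊕ Fin p) ℝ)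
    (hETU : E.IsTotallyUnimodular)
    (k : ℝ) (hk : k = norm2 ((Aᵀ * (A * Aᵀ)⁻¹).mulVec b) / (m + n ^ 2))
    (g : Fin m → ℝ)
    (hg : g = fun i => (⌈((A.submatrix id L)⁻¹.mulVec b) i / k⌉ : ℝ))
    (B : Fin m → Fin m ⊕ Fin p)
    (hEB : IsUnit (E.submatrix id B).det)
    (x : Fin m ⊕ Fin p → ℝ)
    (hxB : x ∘ B = (E.submatrix id B)⁻¹.mulVec g)
    (hx0 : ∀ j, j ∉ Set.range B → x j = 0) :
    normInf x ≤ m * (m * n * (m + n ^ 2) + 1) := by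
  set u := (Aᵀ * (A * Aᵀ)⁻¹) *ᵥ b
  have hAu : A *ᵥ u = b := by
    rw [mulVec_mulVec, ← Matrix.mul_assoc, mul_nonsing_inv _ hinv, one_mulVec]
  have hn : 0 < n := (Function.ne_iff.mp hb).choose.pos
  have hk_pos : 0 < k := hk ▸ div_pos (norm2_pos hb) (by positivity)
  have hu : norm2 u = k * (m + n ^ 2) := by
    rw [hk]
    field_simp
  have hAu_le (r : Fin m) : |(A *ᵥ u) r| ≤ n * norm2 u := by
    simpa using abs_mulVec_apply_le A u
      (fun r j => abs_le_one_of_mem_range_signType_cast (hTU.apply r j)) (abs_le_norm2 u) r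
  have hy (i : Fin m) : |((A.submatrix id L)⁻¹ *ᵥ b) i / k| ≤ m * n * (m + n ^ 2) := by
    rw [abs_div, abs_of_pos hk_pos, div_le_iff₀ hk_pos, ← hAu]
    calc _ ≤ m * (n * norm2 u) := by
          simpa using (hTU.submatrix id L).abs_inv_mulVec_apply_le hAL hAu_le i
      _ = _ := by rw [hu]; ring
  have hg_le (i : Fin m) : |g i| ≤ m * n * (m + n ^ 2) + 1 :=
    hg ▸ abs_intCeil_le_add_one (hy i)
  refine normInf_le (by positivity) fun j => ?_
  simpa using hETU.abs_basicSolution_le hEB hg_le hxB hx0 j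

/-- For the rounded auxiliary problem with constraint matrix
`E = [I, A_L⁻¹ A_{L̄}]` (totally unimodular) and right-hand side
`⌈A_L⁻¹ b / k⌉` where `k = ‖Aᵀ(AAᵀ)⁻¹b‖₂/(m + n²)`, every basic solution `x`
satisfies `‖x‖∞ ≤ m(mn(m + n²) + 1)`. -/
theorem stmt10 {m n p : ℕ} (A : Matrix (Fin m) (Fin n) ℝ)
    (hTU : A.IsTotallyUnimodular) (hrank : A.rank = m)
    (hinv : IsUnit (A * Aᵀ).det)
    (b : Fin m → ℝ) (hb : (Aᵀ * (A * Aᵀ)⁻¹).mulVec b ≠ 0)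
    (L : Fin m → Fin n) (hL : Function.Injective L)
    (hAL : IsUnit (A.submatrix id L).det)
    (Lbar : Fin p → Fin n) (hLbar : Function.Injective Lbar)
    (E : Matrix (Fin m) (Fin m ⊕ Fin p) ℝ)
    (hE : E = Matrix.fromCols 1 ((A.submatrix id L)⁻¹ * A.submatrix id Lbar))
    (hETU : E.IsTotallyUnimodular)
    (k : ℝ) (hk : k = norm2 ((Aᵀ * (A * Aᵀ)⁻¹).mulVec b) / (m + n ^ 2))
    (g : Fin m → ℝ)
    (hg : g = fun i => (⌈((A.submatrix id L)⁻¹.mulVec b) i / k⌉ : ℝ))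
    (B : Fin m → Fin m ⊕ Fin p) (hB : Function.Injective B)
    (hEB : IsUnit (E.submatrix id B).det)
    (x : Fin m ⊕ Fin p → ℝ)
    (hxB : x ∘ B = (E.submatrix id B)⁻¹.mulVec g)
    (hx0 : ∀ j, j ∉ Set.range B → x j = 0) :
    normInf x ≤ m * (m * n * (m + n ^ 2) + 1) :=
  stmt10_general A hTU hinv b hb L hAL E hETU k hk g hg B hEB x hxB hx0
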